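/- Let v > 0, ε > 0, and let z₁, z₂ ∈ R² and radii r₁, r₂ with (1+ε)v ≥ r₁ ≥ r₂ > v and |z₂ − z₁| > r₁ + r₂. Then the measure of the set of affine lines meeting both discs B(z₁,r₁) and B(z₂,r₂) is at most 2π r₂ − (4 − επ) v. -/

import Mathlib

/-! Since the line with normal angle `α + π` and offset `t` is the line with angle `α` and
offset `-t`, folding the angles `[0, 2π)` onto `[0, π)` bounds the measure by `∫₀^π |T(α)| dα`,
where `T(α)` is the set of all offsets `t ∈ ℝ` of lines with normal angle `α` meeting both discs.
`T(α)` is the intersection of the intervals of radii `r₁`, `r₂` around the projections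
`⟨zᵢ, u_α⟩` onto the unit normal `u_α`, and the distance of these centres is
`|z₁ - z₂| |cos (α - θ)| ≥ (r₁ + r₂) |cos (α - θ)|` for a fixed angle `θ`. Hence
`|T(α)| ≤ (r₁ + r₂) (1 - |cos (α - θ)|)`, and integrating gives the bound `(π - 2) (r₁ + r₂)`,
which is at most `2πr₂ - (4 - επ)v` when `(1 + ε)v ≥ r₁ ≥ r₂ > v`. -/

open MeasureTheory Real Set

noncomputable def lineSet (α t : ℝ) : Set (EuclideanSpace ℝ (Fin 2)) :=
  {x | x 0 * Real.cos α + x 1 * Real.sin α = t}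

/-- Measure of the set of lines meeting both `A` and `B`. -/
noncomputable def lineMeas₂ (A B : Set (EuclideanSpace ℝ (Fin 2))) : ENNReal :=
  ∫⁻ α in Set.Ico (0:ℝ) (2 * Real.pi), ∫⁻ t in Set.Ioi (0:ℝ),
    Set.indicator {t' : ℝ | (lineSet α t' ∩ A).Nonempty ∧ (lineSet α t' ∩ B).Nonempty}
      (fun _ => (1 : ENNReal)) t

open scoped RealInnerProductSpace

section Hyperplane

variable {E : Type*} [NormedAddCommGroup E] [InnerProductSpace ℝ E]

theorem setOf_inner_eq_inter_closedBall_nonempty_iff {u : E} (hu : ‖u‖ = 1) (t r : ℝ) (z : E) :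
    ({x | ⟪x, u⟫ = t} ∩ Metric.closedBall z r).Nonempty ↔ t ∈ Metric.closedBall ⟪z, u⟫ r := by
  rw [Metric.mem_closedBall, Real.dist_eq]
  constructor
  · rintro ⟨x, rfl, hx⟩
    calc |⟪x, u⟫ - ⟪z, u⟫| = |⟪x - z, u⟫| := by rw [inner_sub_left]
      _ ≤ ‖x - z‖ * ‖u‖ := abs_real_inner_le_norm _ _
      _ ≤ r := by rwa [hu, mul_one, ← dist_eq_norm]
  · intro h
    refine ⟨z + (t - ⟪z, u⟫) • u, ?_, ?_⟩
    · simp [inner_add_left, inner_smul_left, hu]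
    · simpa [Metric.mem_closedBall, dist_eq_norm, norm_smul, hu] using h

end Hyperplane

noncomputable def dirVec (α : ℝ) : EuclideanSpace ℝ (Fin 2) := !₂[cos α, sin α]

theorem inner_dirVec (x : EuclideanSpace ℝ (Fin 2)) (α : ℝ) :
    ⟪x, dirVec α⟫ = x 0 * cos α + x 1 * sin α := by
  simp [dirVec, PiLp.inner_apply, Fin.sum_univ_two, mul_comm]

theorem norm_dirVec (α : ℝ) : ‖dirVec α‖ = 1 := by
  simp [EuclideanSpace.norm_eq, dirVec]

theorem lineSet_eq_setOf_inner (α t : ℝ) : lineSet α t = {x | ⟪x, dirVec α⟫ = t} := by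
  simp only [lineSet, inner_dirVec]

theorem setOf_lineSet_inter_closedBall_nonempty (α r : ℝ) (z : EuclideanSpace ℝ (Fin 2)) :
    {t | (lineSet α t ∩ Metric.closedBall z r).Nonempty} = Metric.closedBall ⟪z, dirVec α⟫ r := by
  ext t
  simp only [lineSet_eq_setOf_inner]
  exact setOf_inner_eq_inter_closedBall_nonempty_iff (norm_dirVec α) t r z

theorem lineSet_add_pi (α t : ℝ) : lineSet (α + π) t = lineSet α (-t) := by
  ext x
  simp only [lineSet, mem_ofPred_eq, cos_add_pi, sin_add_pi]
  constructor <;> intro h <;> linarith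

theorem exists_inner_dirVec_eq_norm_mul_cos (w : EuclideanSpace ℝ (Fin 2)) :
    ∃ θ, ∀ α, ⟪w, dirVec α⟫ = ‖w‖ * cos (α - θ) := by
  set c : ℂ := ⟨w 0, w 1⟩
  have hc : ‖c‖ = ‖w‖ := by
    rw [Complex.norm_def, Complex.normSq_mk, EuclideanSpace.norm_eq, Fin.sum_univ_two]
    simp only [Real.norm_eq_abs, pow_two, abs_mul_abs_self]
  refine ⟨c.arg, fun α => ?_⟩
  rw [inner_dirVec, cos_sub, ← hc]
  linear_combination
    cos α * (Complex.norm_mul_cos_arg c).symm + sin α * (Complex.norm_mul_sin_arg c).symm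

theorem Real.volume_inter_Ioi_add_volume_neg_inter_Ioi_le (S : Set ℝ) :
    volume (S ∩ Ioi 0) + volume (-S ∩ Ioi 0) ≤ volume S := by
  have hneg : -S ∩ Ioi 0 ⊆ -(S \ Ioi 0) := fun t ⟨hS, ht⟩ =>
    ⟨hS, by simpa using (mem_Ioi.mp ht).le⟩
  calc volume (S ∩ Ioi 0) + volume (-S ∩ Ioi 0)
      ≤ volume (S ∩ Ioi 0) + volume (S \ Ioi 0) :=
        add_le_add_right ((measure_mono hneg).trans_eq (Measure.measure_neg volume _)) _
    _ = volume S := measure_inter_add_sdiff S measurableSet_Ioi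

theorem Real.volume_closedBall_inter_closedBall_le (x y r s : ℝ) :
    volume (Metric.closedBall x r ∩ Metric.closedBall y s) ≤ ENNReal.ofReal (r + s - dist x y) := by
  rw [Real.closedBall_eq_Icc, Real.closedBall_eq_Icc, Icc_inter_Icc, Real.volume_Icc, Real.dist_eq]
  refine ENNReal.ofReal_le_ofReal ?_
  rcases abs_cases (x - y) with ⟨h, _⟩ | ⟨h, _⟩ <;> rw [h]
  · linarith [min_le_right (x + r) (y + s), le_max_left (x - r) (y - s)]
  · linarith [min_le_left (x + r) (y + s), le_max_right (x - r) (y - s)]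

theorem integral_abs_cos_sub (θ : ℝ) : ∫ α in 0..π, |cos (α - θ)| = 2 := by
  have hper : Function.Periodic (fun x => |cos x|) π := fun x => by simp [cos_add_pi]
  rw [intervalIntegral.integral_comp_sub_right (fun x => |cos x|), zero_sub,
    show π - θ = -θ + π by ring, hper.intervalIntegral_add_eq (-θ) (-(π / 2)),
    show -(π / 2) + π = π / 2 by ring]
  calc ∫ x in -(π / 2)..π / 2, |cos x| = ∫ x in -(π / 2)..π / 2, cos x := by
        refine intervalIntegral.integral_congr fun x hx => abs_of_nonneg (cos_nonneg_of_mem_Icc ?_)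
        rwa [uIcc_of_le (by linarith [pi_pos])] at hx
    _ = 2 := by simp [integral_cos]; ring

theorem lineMeas₂_le_lintegral_volume (A B : Set (EuclideanSpace ℝ (Fin 2))) :
    lineMeas₂ A B ≤ ∫⁻ α in Ico 0 π,
      volume {t | (lineSet α t ∩ A).Nonempty ∧ (lineSet α t ∩ B).Nonempty} := by
  set S : ℝ → Set ℝ := fun α => {t | (lineSet α t ∩ A).Nonempty ∧ (lineSet α t ∩ B).Nonempty}
  have hS : ∀ α, S (α + π) = -S α := fun α => by
    ext t
    simp only [S, lineSet_add_pi, mem_neg, mem_ofPred_eq]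
  have hshift : ∫⁻ α in Ico π (2 * π), volume (S α ∩ Ioi 0)
      = ∫⁻ α in Ico 0 π, volume (S (α + π) ∩ Ioi 0) := by
    rw [← (measurePreserving_add_right volume π).setLIntegral_comp_preimage_emb
      (measurableEmbedding_addRight π), preimage_add_const_Ico, sub_self, two_mul,
      add_sub_cancel_right]
  calc lineMeas₂ A B ≤ ∫⁻ α in Ico 0 (2 * π), volume (S α ∩ Ioi 0) :=
        lintegral_mono fun α => (lintegral_indicator_one_le _).trans_eq
          (Measure.restrict_apply' measurableSet_Ioi)
    _ = (∫⁻ α in Ico 0 π, volume (S α ∩ Ioi 0)) + ∫⁻ α in Ico π (2 * π), volume (S α ∩ Ioi 0) := by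
        rw [← lintegral_union measurableSet_Ico Ico_disjoint_Ico_same,
          Ico_union_Ico_eq_Ico pi_nonneg (by linarith [pi_pos])]
    _ ≤ ∫⁻ α in Ico 0 π, (volume (S α ∩ Ioi 0) + volume (S (α + π) ∩ Ioi 0)) := by
        rw [hshift]; exact le_lintegral_add _ _
    _ ≤ ∫⁻ α in Ico 0 π, volume (S α) := lintegral_mono fun α => by
        rw [hS]; exact Real.volume_inter_Ioi_add_volume_neg_inter_Ioi_le _

theorem lintegral_ofReal_mul_one_sub_abs_cos {c : ℝ} (hc : 0 ≤ c) (θ : ℝ) :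
    ∫⁻ α in Ico 0 π, ENNReal.ofReal (c * (1 - |cos (α - θ)|)) = ENNReal.ofReal ((π - 2) * c) := by
  have hcont : Continuous fun α => c * (1 - |cos (α - θ)|) := by fun_prop
  rw [← ofReal_integral_eq_lintegral_ofReal
    (hcont.integrableOn_Icc.mono_set Ico_subset_Icc_self)
    (Filter.Eventually.of_forall fun α => mul_nonneg hc (sub_nonneg.2 (abs_cos_le_one _))),
    integral_Ico_eq_integral_Ioo, ← integral_Ioc_eq_integral_Ioo,
    ← intervalIntegral.integral_of_le pi_nonneg, intervalIntegral.integral_const_mul,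
    intervalIntegral.integral_sub intervalIntegrable_const
      ((by fun_prop : Continuous fun α => |cos (α - θ)|).intervalIntegrable _ _),
    integral_abs_cos_sub, intervalIntegral.integral_const, smul_eq_mul, mul_one, sub_zero, mul_comm]

theorem lineMeas₂_closedBall_le (z₁ z₂ : EuclideanSpace ℝ (Fin 2)) {r₁ r₂ : ℝ}
    (hr : 0 ≤ r₁ + r₂) (hd : r₁ + r₂ ≤ dist z₁ z₂) :
    lineMeas₂ (Metric.closedBall z₁ r₁) (Metric.closedBall z₂ r₂)
      ≤ ENNReal.ofReal ((π - 2) * (r₁ + r₂)) := by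
  obtain ⟨θ, hθ⟩ := exists_inner_dirVec_eq_norm_mul_cos (z₁ - z₂)
  have hchord : ∀ α, volume {t | (lineSet α t ∩ Metric.closedBall z₁ r₁).Nonempty ∧
      (lineSet α t ∩ Metric.closedBall z₂ r₂).Nonempty}
        ≤ ENNReal.ofReal ((r₁ + r₂) * (1 - |cos (α - θ)|)) := fun α => by
    rw [ofPred_and, setOf_lineSet_inter_closedBall_nonempty,
      setOf_lineSet_inter_closedBall_nonempty]
    refine (Real.volume_closedBall_inter_closedBall_le _ _ _ _).trans (ENNReal.ofReal_le_ofReal ?_)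
    rw [Real.dist_eq, ← inner_sub_left, hθ, abs_mul, abs_norm, ← dist_eq_norm]
    nlinarith [abs_nonneg (cos (α - θ))]
  calc lineMeas₂ (Metric.closedBall z₁ r₁) (Metric.closedBall z₂ r₂)
      ≤ ∫⁻ α in Ico 0 π, ENNReal.ofReal ((r₁ + r₂) * (1 - |cos (α - θ)|)) :=
        (lineMeas₂_le_lintegral_volume _ _).trans (lintegral_mono hchord)
    _ = ENNReal.ofReal ((π - 2) * (r₁ + r₂)) := lintegral_ofReal_mul_one_sub_abs_cos hr θ

theorem lineMeas₂_le_general (v ε : ℝ) (hv : 0 < v)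
    (z₁ z₂ : EuclideanSpace ℝ (Fin 2)) (r₁ r₂ : ℝ)
    (h₂ : v < r₂) (h₁₂ : r₂ ≤ r₁) (h₁ : r₁ ≤ (1 + ε) * v)
    (hdist : r₁ + r₂ < dist z₂ z₁) :
    lineMeas₂ (Metric.closedBall z₁ r₁) (Metric.closedBall z₂ r₂)
      ≤ ENNReal.ofReal (2 * Real.pi * r₂ - (4 - ε * Real.pi) * v) := by
  refine (lineMeas₂_closedBall_le z₁ z₂ (by linarith) (by rw [dist_comm]; linarith)).trans
    (ENNReal.ofReal_le_ofReal ?_)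
  nlinarith [pi_pos, mul_le_mul_of_nonneg_left h₁ pi_pos.le]

/-- If `(1+ε)v ≥ r₁ ≥ r₂ > v` and the two discs are disjoint, then the measure of lines
meeting both discs is at most `2π r₂ − (4 − επ) v`. -/
theorem lineMeas₂_le (v ε : ℝ) (hv : 0 < v) (hε : 0 < ε)
    (z₁ z₂ : EuclideanSpace ℝ (Fin 2)) (r₁ r₂ : ℝ)
    (h₂ : v < r₂) (h₁₂ : r₂ ≤ r₁) (h₁ : r₁ ≤ (1 + ε) * v)
    (hdist : r₁ + r₂ < dist z₂ z₁) :
    lineMeas₂ (Metric.closedBall z₁ r₁) (Metric.closedBall z₂ r₂)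
      ≤ ENNReal.ofReal (2 * Real.pi * r₂ - (4 - ε * Real.pi) * v) :=
  lineMeas₂_le_general v ε hv z₁ z₂ r₁ r₂ h₂ h₁₂ h₁ hdist
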